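/- arXiv:1601.03279 — 2 statements merged into one kernel-verified Lean document; each statement's English description precedes it below -/
import Mathlib

section
/- Let w ∈ C³ on a rectangle containing two congruent triangles K_{i−1} and K_i, where K_{i−1} has vertices (x_{i−1},y_j), (x_i,y_j), (x_{i−1},y_{j+1}) and K_i has vertices (x_i,y_j), (x_{i+1},y_j), (x_i,y_{j+1}), with equal horizontal steps h_x = x_i − x_{i−1} = x_{i+1} − x_i and vertical step h_y = y_{j+1} − y_j. Then |∫_{K_{i−1}} (w − w^I) − ∫_{K_i} (w − w^I)| ≤ C Σ_{l+m=3} h_x^{l+1} h_y^{m+1} ‖∂_x^l ∂_y^m w‖_{L^∞(K_{i−1} ∪ K_i)}, where w^I denotes the piecewise-linear interpolant of w at the vertices of each triangle and C is a constant independent of w, h_x, h_y. -/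
open MeasureTheory Set

noncomputable def pdx (f : ℝ × ℝ → ℝ) : ℝ × ℝ → ℝ := fun p => deriv (fun t => f (t, p.2)) p.1

noncomputable def pdy (f : ℝ × ℝ → ℝ) : ℝ × ℝ → ℝ := fun p => deriv (fun t => f (p.1, t)) p.2

/-- the closed right triangle with vertices `(xi,yj)`, `(xi+hx,yj)`, `(xi,yj+hy)` -/
def tri (xi yj hx hy : ℝ) : Set (ℝ × ℝ) :=
  {p | xi ≤ p.1 ∧ yj ≤ p.2 ∧ (p.1 - xi) / hx + (p.2 - yj) / hy ≤ 1}

/-- the affine interpolant of `w` at the vertices of `tri xi yj hx hy` -/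
noncomputable def interp (w : ℝ × ℝ → ℝ) (xi yj hx hy : ℝ) : ℝ × ℝ → ℝ :=
  fun p => w (xi, yj) * (1 - (p.1 - xi) / hx - (p.2 - yj) / hy)
    + w (xi + hx, yj) * ((p.1 - xi) / hx) + w (xi, yj + hy) * ((p.2 - yj) / hy)

/-!
Let `P` be the quadratic Taylor polynomial of `w` at the common vertex `(xᵢ, yⱼ)` and split
`w = P + (w - P)`; the interpolation error `∫_K (w - wᴵ)` is linear in `w`.

For the quadratic part, translating `P` by `(h_x, 0)` changes it by an affine function, which the
linear interpolant reproduces exactly; so the errors of `P` on `K_{i-1}` and on its translate `K_i`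
coincide and cancel in the difference.

For the remainder, `|w - P|` is bounded on each triangle by `Σ M_{lm} h_x^l h_y^m`, by chaining
one-dimensional Taylor expansions along an axis-parallel path from `(xᵢ, yⱼ)` that stays inside the
triangle: vertical then horizontal in `K_i`, horizontal then vertical in `K_{i-1}` (the second is
the first applied to `w ∘ Prod.swap`, using Clairaut). The interpolant of `w - P` obeys the same
bound, and integrating over a triangle of area at most `h_x h_y` gives the fourth-order terms.
-/

section PartialDerivatives

variable {f : ℝ × ℝ → ℝ}

lemma hasDerivAt_pdx (hf : Differentiable ℝ f) (x y : ℝ) :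
    HasDerivAt (fun s => f (s, y)) (pdx f (x, y)) x :=
  (hf.comp (differentiable_id.prodMk (differentiable_const y)) x).hasDerivAt

lemma hasDerivAt_pdy (hf : Differentiable ℝ f) (x y : ℝ) :
    HasDerivAt (fun t => f (x, t)) (pdy f (x, y)) y :=
  (hf.comp ((differentiable_const x).prodMk differentiable_id) y).hasDerivAt

lemma pdx_eq_fderiv {p : ℝ × ℝ} (hf : DifferentiableAt ℝ f p) :
    pdx f p = fderiv ℝ f p (1, 0) :=
  (hf.hasFDerivAt.comp_hasDerivAt p.1 ((hasDerivAt_id _).prodMk (hasDerivAt_const _ _))).deriv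

lemma pdy_eq_fderiv {p : ℝ × ℝ} (hf : DifferentiableAt ℝ f p) :
    pdy f p = fderiv ℝ f p (0, 1) :=
  (hf.hasFDerivAt.comp_hasDerivAt p.2 ((hasDerivAt_const _ _).prodMk (hasDerivAt_id _))).deriv

lemma contDiff_pdx {n : ℕ∞} (hf : ContDiff ℝ (n + 1) f) : ContDiff ℝ n (pdx f) := by
  have hdf : Differentiable ℝ f := hf.differentiable (by simp)
  rw [show pdx f = fun p => fderiv ℝ f p (1, 0) from funext fun p => pdx_eq_fderiv (hdf p)]
  exact (hf.fderiv_right le_rfl).clm_apply contDiff_const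

lemma contDiff_pdy {n : ℕ∞} (hf : ContDiff ℝ (n + 1) f) : ContDiff ℝ n (pdy f) := by
  have hdf : Differentiable ℝ f := hf.differentiable (by simp)
  rw [show pdy f = fun p => fderiv ℝ f p (0, 1) from funext fun p => pdy_eq_fderiv (hdf p)]
  exact (hf.fderiv_right le_rfl).clm_apply contDiff_const

lemma hasDerivAt_iterate_pdx {k : ℕ} (hf : ContDiff ℝ (k + 1) f) (x y : ℝ) :
    HasDerivAt (fun s => (pdx^[k] f) (s, y)) ((pdx^[k + 1] f) (x, y)) x := by
  induction k generalizing f with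
  | zero => exact hasDerivAt_pdx (hf.differentiable (by simp)) x y
  | succ k ih =>
    simp only [Function.iterate_succ_apply]
    exact ih (contDiff_pdx (by exact_mod_cast hf))

lemma hasDerivAt_iterate_pdy {k : ℕ} (hf : ContDiff ℝ (k + 1) f) (x y : ℝ) :
    HasDerivAt (fun t => (pdy^[k] f) (x, t)) ((pdy^[k + 1] f) (x, y)) y := by
  induction k generalizing f with
  | zero => exact hasDerivAt_pdy (hf.differentiable (by simp)) x y
  | succ k ih =>
    simp only [Function.iterate_succ_apply]
    exact ih (contDiff_pdy (by exact_mod_cast hf))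

lemma pdx_pdy_comm (hf : ContDiff ℝ 2 f) : pdx (pdy f) = pdy (pdx f) := by
  have hdf : Differentiable ℝ f := hf.differentiable (by simp)
  have hd2 : Differentiable ℝ (fderiv ℝ f) :=
    (hf.fderiv_right (m := 1) (by norm_num)).differentiable (by simp)
  have second : ∀ v w p, fderiv ℝ (fun q => fderiv ℝ f q v) p w = fderiv ℝ (fderiv ℝ f) p w v :=
    fun v w p => by
      rw [((hd2 p).hasFDerivAt.clm_apply (hasFDerivAt_const v p)).fderiv]
      simp
  ext p
  rw [show pdy f = fun q => fderiv ℝ f q (0, 1) from funext fun q => pdy_eq_fderiv (hdf q),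
    show pdx f = fun q => fderiv ℝ f q (1, 0) from funext fun q => pdx_eq_fderiv (hdf q),
    pdx_eq_fderiv ((hd2 p).clm_apply (differentiableAt_const _)),
    pdy_eq_fderiv ((hd2 p).clm_apply (differentiableAt_const _)), second, second]
  exact (hf.contDiffAt.isSymmSndFDerivAt (by simp)) _ _

lemma pdx_comp_swap : pdx (f ∘ Prod.swap) = pdy f ∘ Prod.swap := rfl

lemma pdy_comp_swap : pdy (f ∘ Prod.swap) = pdx f ∘ Prod.swap := rfl

lemma pdx_pdx_pdy_comm (hf : ContDiff ℝ 3 f) :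
    pdx (pdx (pdy f)) = pdy (pdx (pdx f)) := by
  rw [pdx_pdy_comm (hf.of_le (by norm_num)), pdx_pdy_comm (contDiff_pdx (n := 2) hf)]

lemma pdx_pdy_pdy_comm (hf : ContDiff ℝ 3 f) :
    pdx (pdy (pdy f)) = pdy (pdy (pdx f)) := by
  rw [pdx_pdy_comm (contDiff_pdy (n := 2) hf), pdx_pdy_comm (hf.of_le (by norm_num))]

end PartialDerivatives

section Taylor

open Finset
open scoped Nat

lemma hasDerivAt_taylorSum (c : ℕ → ℝ) (a t : ℝ) (n : ℕ) :
    HasDerivAt (fun s => ∑ k ∈ range (n + 1), (s - a) ^ k / k ! * c k)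
      (∑ k ∈ range n, (t - a) ^ k / k ! * c (k + 1)) t := by
  simp only [sum_range_succ' _ n, pow_zero, Nat.factorial_zero, Nat.cast_one, div_one, one_mul]
  apply HasDerivAt.add_const
  refine HasDerivAt.fun_sum fun k _ => ?_
  have h : HasDerivAt (fun x => (x - a) ^ (k + 1)) ((k + 1) * (t - a) ^ k) t := by
    simpa using ((hasDerivAt_id t).sub_const a).fun_pow (k + 1)
  refine ((h.div_const ((k + 1)! : ℝ)).mul_const (c (k + 1))).congr_deriv ?_
  push_cast [Nat.factorial_succ]
  field_simp

lemma abs_sub_taylorSum_le (n : ℕ) {f : ℕ → ℝ → ℝ}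
    (hf : ∀ k < n, ∀ t, HasDerivAt (f k) (f (k + 1) t) t) {a b M : ℝ}
    (hM : ∀ t ∈ uIcc a b, |f n t| ≤ M) :
    |f 0 b - ∑ k ∈ range n, (b - a) ^ k / k ! * f k a| ≤ M * |b - a| ^ n := by
  induction n generalizing f b with
  | zero => simpa using hM b right_mem_uIcc
  | succ n ih =>
    have hg : ∀ t, HasDerivAt (fun t => f 0 t - ∑ k ∈ range (n + 1), (t - a) ^ k / k ! * f k a)
        (f 1 t - ∑ k ∈ range n, (t - a) ^ k / k ! * f (k + 1) a) t := fun t =>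
      (hf 0 n.succ_pos t).sub (hasDerivAt_taylorSum (f · a) a t n)
    -- the derivative of the remainder of `f 0` is the remainder of `f 1`, one order lower
    have hg' : ∀ t ∈ uIcc a b,
        ‖f 1 t - ∑ k ∈ range n, (t - a) ^ k / k ! * f (k + 1) a‖ ≤ M * |b - a| ^ n := by
      intro t ht
      have hM0 : 0 ≤ M := (abs_nonneg _).trans (hM a left_mem_uIcc)
      calc _ ≤ M * |t - a| ^ n :=
            ih (f := (f <| · + 1)) (fun k hk => hf (k + 1) (by omega))
              fun s hs => hM s (uIcc_subset_uIcc left_mem_uIcc ht hs)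
        _ ≤ M * |b - a| ^ n := by
          gcongr ?_ * ?_ ^ n
          exact abs_sub_left_of_mem_uIcc ht
    have := (convex_uIcc a b).norm_image_sub_le_of_norm_hasDerivWithin_le
      (fun t _ => (hg t).hasDerivWithinAt) hg' left_mem_uIcc right_mem_uIcc
    simpa [sum_range_succ', pow_succ, mul_assoc] using this

end Taylor

noncomputable def taylorPoly2 (w : ℝ × ℝ → ℝ) (c p : ℝ × ℝ) : ℝ :=
  w c + pdx w c * (p.1 - c.1) + pdy w c * (p.2 - c.2) + pdx (pdx w) c / 2 * (p.1 - c.1) ^ 2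
    + pdy (pdx w) c * (p.1 - c.1) * (p.2 - c.2) + pdy (pdy w) c / 2 * (p.2 - c.2) ^ 2

lemma abs_sub_taylorPoly2_le {w : ℝ × ℝ → ℝ} (hw : ContDiff ℝ 3 w) {x₀ y₀ x y A₃₀ A₂₁ A₁₂ A₀₃ : ℝ}
    (h₃₀ : ∀ s ∈ uIcc x₀ x, |pdx (pdx (pdx w)) (s, y)| ≤ A₃₀)
    (h₂₁ : ∀ t ∈ uIcc y₀ y, |pdy (pdx (pdx w)) (x₀, t)| ≤ A₂₁)
    (h₁₂ : ∀ t ∈ uIcc y₀ y, |pdy (pdy (pdx w)) (x₀, t)| ≤ A₁₂)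
    (h₀₃ : ∀ t ∈ uIcc y₀ y, |pdy (pdy (pdy w)) (x₀, t)| ≤ A₀₃) :
    |w (x, y) - taylorPoly2 w (x₀, y₀) (x, y)| ≤ A₃₀ * |x - x₀| ^ 3
      + A₂₁ * |x - x₀| ^ 2 * |y - y₀| + A₁₂ * |x - x₀| * |y - y₀| ^ 2 + A₀₃ * |y - y₀| ^ 3 := by
  have hx := abs_sub_taylorSum_le 3 (f := fun k s => (pdx^[k] w) (s, y))
    (fun k hk s => hasDerivAt_iterate_pdx (hw.of_le (by exact_mod_cast hk)) s y) h₃₀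
  have hy := abs_sub_taylorSum_le 3 (f := fun k t => (pdy^[k] w) (x₀, t))
    (fun k hk t => hasDerivAt_iterate_pdy (hw.of_le (by exact_mod_cast hk)) x₀ t) h₀₃
  have hw₁ : ContDiff ℝ 2 (pdx w) := contDiff_pdx (n := 2) hw
  have hw₂ : ContDiff ℝ 1 (pdx (pdx w)) := contDiff_pdx (n := 1) hw₁
  have hxy := abs_sub_taylorSum_le 2 (f := fun k t => (pdy^[k] (pdx w)) (x₀, t))
    (fun k hk t => hasDerivAt_iterate_pdy (hw₁.of_le (by exact_mod_cast hk)) x₀ t) h₁₂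
  have hxxy := abs_sub_taylorSum_le 1 (f := fun k t => (pdy^[k] (pdx (pdx w))) (x₀, t))
    (fun k hk t => hasDerivAt_iterate_pdy (hw₂.of_le (by exact_mod_cast hk)) x₀ t) h₂₁
  simp only [Function.iterate_zero, id_eq, Finset.sum_range_succ, Finset.range_one,
    Finset.sum_singleton, pow_zero, Nat.factorial_zero, Nat.cast_one, ne_eq, one_ne_zero,
    not_false_eq_true, div_self, one_mul, pow_one, Nat.factorial_one, div_one,
    Nat.factorial_two, Nat.cast_ofNat, Function.iterate_succ, Function.comp_apply, sq_abs]
    at hx hy hxy hxxy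
  have hA₂₁ : 0 ≤ A₂₁ := (abs_nonneg _).trans (h₂₁ y₀ left_mem_uIcc)
  -- the remainders along `(x₀, y₀) → (x₀, y) → (x, y)` add up to `w - P`
  calc |w (x, y) - taylorPoly2 w (x₀, y₀) (x, y)|
      = |(w (x, y) - (w (x₀, y) + (x - x₀) * pdx w (x₀, y)
          + (x - x₀) ^ 2 / 2 * pdx (pdx w) (x₀, y)))
        + (w (x₀, y) - (w (x₀, y₀) + (y - y₀) * pdy w (x₀, y₀)
          + (y - y₀) ^ 2 / 2 * pdy (pdy w) (x₀, y₀)))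
        + (x - x₀) * (pdx w (x₀, y) - (pdx w (x₀, y₀) + (y - y₀) * pdy (pdx w) (x₀, y₀)))
        + (x - x₀) ^ 2 / 2 * (pdx (pdx w) (x₀, y) - pdx (pdx w) (x₀, y₀))| := by
        rw [taylorPoly2]; ring_nf
    _ ≤ A₃₀ * |x - x₀| ^ 3 + A₀₃ * |y - y₀| ^ 3 + |x - x₀| * (A₁₂ * (y - y₀) ^ 2)
        + |x - x₀| ^ 2 / 2 * (A₂₁ * |y - y₀|) := by
        refine (norm_add₄_le (E := ℝ)).trans ?_
        simp only [Real.norm_eq_abs, abs_mul, abs_div, abs_pow, abs_two]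
        gcongr
    _ ≤ _ := by
        rw [← sq_abs (y - y₀)]
        have : 0 ≤ A₂₁ * |x - x₀| ^ 2 * |y - y₀| := by positivity
        linarith

lemma taylorPoly2_comp_swap {w : ℝ × ℝ → ℝ} (hw : ContDiff ℝ 2 w) (c p : ℝ × ℝ) :
    taylorPoly2 (w ∘ Prod.swap) c.swap p.swap = taylorPoly2 w c p := by
  simp only [taylorPoly2, pdx_comp_swap, pdy_comp_swap, Function.comp_apply, Prod.swap_swap,
    Prod.fst_swap, Prod.snd_swap, congrFun (pdx_pdy_comm hw) c]
  ring

lemma abs_sub_taylorPoly2_le' {w : ℝ × ℝ → ℝ} (hw : ContDiff ℝ 3 w) {x₀ y₀ x y A₃₀ A₂₁ A₁₂ A₀₃ : ℝ}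
    (h₃₀ : ∀ s ∈ uIcc x₀ x, |pdx (pdx (pdx w)) (s, y₀)| ≤ A₃₀)
    (h₂₁ : ∀ s ∈ uIcc x₀ x, |pdy (pdx (pdx w)) (s, y₀)| ≤ A₂₁)
    (h₁₂ : ∀ s ∈ uIcc x₀ x, |pdy (pdy (pdx w)) (s, y₀)| ≤ A₁₂)
    (h₀₃ : ∀ t ∈ uIcc y₀ y, |pdy (pdy (pdy w)) (x, t)| ≤ A₀₃) :
    |w (x, y) - taylorPoly2 w (x₀, y₀) (x, y)| ≤ A₃₀ * |x - x₀| ^ 3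
      + A₂₁ * |x - x₀| ^ 2 * |y - y₀| + A₁₂ * |x - x₀| * |y - y₀| ^ 2 + A₀₃ * |y - y₀| ^ 3 := by
  have h := abs_sub_taylorPoly2_le (w := w ∘ Prod.swap) (x₀ := y₀) (y₀ := x₀) (x := y) (y := x)
    (hw.comp (contDiff_snd.prodMk contDiff_fst)) h₀₃
    (fun s hs => by simpa [pdx_comp_swap, pdy_comp_swap, pdx_pdy_pdy_comm hw] using h₁₂ s hs)
    (fun s hs => by simpa [pdx_comp_swap, pdy_comp_swap, pdx_pdx_pdy_comm hw] using h₂₁ s hs) h₃₀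
  calc |w (x, y) - taylorPoly2 w (x₀, y₀) (x, y)|
      = |(w ∘ Prod.swap) (y, x) - taylorPoly2 (w ∘ Prod.swap) (y₀, x₀) (y, x)| := by
        rw [← taylorPoly2_comp_swap (hw.of_le (by norm_num)) (x₀, y₀) (x, y)]; rfl
    _ ≤ _ := h
    _ = _ := by ring

section Triangle

variable {a b hx hy : ℝ}

lemma mem_tri_of_le (hhx : 0 < hx) (hhy : 0 < hy) {p q : ℝ × ℝ} (hq : q ∈ tri a b hx hy)
    (h₁ : a ≤ p.1) (h₂ : b ≤ p.2) (h₁' : p.1 ≤ q.1) (h₂' : p.2 ≤ q.2) : p ∈ tri a b hx hy :=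
  ⟨h₁, h₂, le_trans (by gcongr) hq.2.2⟩

lemma le_of_mem_tri (hhx : 0 < hx) (hhy : 0 < hy) {p : ℝ × ℝ} (hp : p ∈ tri a b hx hy) :
    p.1 ≤ a + hx ∧ p.2 ≤ b + hy := by
  obtain ⟨h₁, h₂, h₃⟩ := hp
  have h₄ : (p.1 - a) / hx ≤ 1 := by linarith [div_nonneg (sub_nonneg.2 h₂) hhy.le]
  have h₅ : (p.2 - b) / hy ≤ 1 := by linarith [div_nonneg (sub_nonneg.2 h₁) hhx.le]
  exact ⟨by linarith [(div_le_one hhx).1 h₄], by linarith [(div_le_one hhy).1 h₅]⟩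

lemma isClosed_tri : IsClosed (tri a b hx hy) :=
  (isClosed_le continuous_const continuous_fst).inter <|
    (isClosed_le continuous_const continuous_snd).inter <|
      isClosed_le (f := fun p : ℝ × ℝ => (p.1 - a) / hx + (p.2 - b) / hy) (by fun_prop)
        continuous_const

lemma tri_subset_Icc (hhx : 0 < hx) (hhy : 0 < hy) : tri a b hx hy ⊆ Icc (a, b) (a + hx, b + hy) :=
  fun _ hp => ⟨⟨hp.1, hp.2.1⟩, le_of_mem_tri hhx hhy hp⟩

lemma isCompact_tri (hhx : 0 < hx) (hhy : 0 < hy) : IsCompact (tri a b hx hy) :=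
  isCompact_Icc.of_isClosed_subset isClosed_tri (tri_subset_Icc hhx hhy)

lemma volume_real_tri_le (hhx : 0 < hx) (hhy : 0 < hy) : volume.real (tri a b hx hy) ≤ hx * hy := by
  calc volume.real (tri a b hx hy) ≤ volume.real (Icc (a, b) (a + hx, b + hy)) :=
        measureReal_mono (tri_subset_Icc hhx hhy) isCompact_Icc.measure_lt_top.ne
    _ = hx * hy := by
        rw [← Icc_prod_Icc, Measure.volume_eq_prod, measureReal_prod_prod,
          Real.volume_real_Icc_of_le (by linarith), Real.volume_real_Icc_of_le (by linarith)]
        ring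

lemma preimage_sub_tri (u v : ℝ) :
    (· - (u, v)) ⁻¹' tri (a - u) (b - v) hx hy = tri a b hx hy := by
  ext p
  simp [tri, sub_sub_sub_cancel_right]

end Triangle

section TriangleEstimates

variable {w : ℝ × ℝ → ℝ} {a b hx hy M₃₀ M₂₁ M₁₂ M₀₃ : ℝ}

lemma abs_sub_taylorPoly2_le_on_tri (hw : ContDiff ℝ 3 w) (hhx : 0 < hx) (hhy : 0 < hy)
    (h₃₀ : ∀ p ∈ tri a b hx hy, |pdx (pdx (pdx w)) p| ≤ M₃₀)
    (h₂₁ : ∀ p ∈ tri a b hx hy, |pdy (pdx (pdx w)) p| ≤ M₂₁)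
    (h₁₂ : ∀ p ∈ tri a b hx hy, |pdy (pdy (pdx w)) p| ≤ M₁₂)
    (h₀₃ : ∀ p ∈ tri a b hx hy, |pdy (pdy (pdy w)) p| ≤ M₀₃) {p : ℝ × ℝ}
    (hp : p ∈ tri a b hx hy) :
    |w p - taylorPoly2 w (a, b) p|
      ≤ M₃₀ * hx ^ 3 + M₂₁ * hx ^ 2 * hy + M₁₂ * hx * hy ^ 2 + M₀₃ * hy ^ 3 := by
  obtain ⟨x, y⟩ := p
  have hax : a ≤ x := hp.1
  have hby : b ≤ y := hp.2.1
  obtain ⟨hxa, hyb⟩ := le_of_mem_tri hhx hhy hp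
  have horizontal : ∀ s ∈ uIcc a x, (s, y) ∈ tri a b hx hy := fun s hs => by
    rw [uIcc_of_le hax] at hs
    exact mem_tri_of_le hhx hhy hp hs.1 hby hs.2 le_rfl
  have vertical : ∀ t ∈ uIcc b y, (a, t) ∈ tri a b hx hy := fun t ht => by
    rw [uIcc_of_le hby] at ht
    exact mem_tri_of_le hhx hhy hp le_rfl ht.1 hax ht.2
  refine (abs_sub_taylorPoly2_le hw (fun s hs => h₃₀ _ (horizontal s hs))
    (fun t ht => h₂₁ _ (vertical t ht)) (fun t ht => h₁₂ _ (vertical t ht))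
    (fun t ht => h₀₃ _ (vertical t ht))).trans ?_
  have hM₃₀ : 0 ≤ M₃₀ := (abs_nonneg _).trans (h₃₀ _ hp)
  have hM₂₁ : 0 ≤ M₂₁ := (abs_nonneg _).trans (h₂₁ _ hp)
  have hM₁₂ : 0 ≤ M₁₂ := (abs_nonneg _).trans (h₁₂ _ hp)
  have hM₀₃ : 0 ≤ M₀₃ := (abs_nonneg _).trans (h₀₃ _ hp)
  have hdx : |x - a| ≤ hx := abs_le.2 ⟨by linarith, by linarith⟩
  have hdy : |y - b| ≤ hy := abs_le.2 ⟨by linarith, by linarith⟩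
  gcongr

lemma abs_sub_taylorPoly2_le_on_left_tri (hw : ContDiff ℝ 3 w) (hhx : 0 < hx) (hhy : 0 < hy)
    (h₃₀ : ∀ p ∈ tri (a - hx) b hx hy, |pdx (pdx (pdx w)) p| ≤ M₃₀)
    (h₂₁ : ∀ p ∈ tri (a - hx) b hx hy, |pdy (pdx (pdx w)) p| ≤ M₂₁)
    (h₁₂ : ∀ p ∈ tri (a - hx) b hx hy, |pdy (pdy (pdx w)) p| ≤ M₁₂)
    (h₀₃ : ∀ p ∈ tri (a - hx) b hx hy, |pdy (pdy (pdy w)) p| ≤ M₀₃) {p : ℝ × ℝ}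
    (hp : p ∈ tri (a - hx) b hx hy) :
    |w p - taylorPoly2 w (a, b) p|
      ≤ M₃₀ * hx ^ 3 + M₂₁ * hx ^ 2 * hy + M₁₂ * hx * hy ^ 2 + M₀₃ * hy ^ 3 := by
  obtain ⟨x, y⟩ := p
  have hax : a - hx ≤ x := hp.1
  have hby : b ≤ y := hp.2.1
  obtain ⟨hxa, hyb⟩ := le_of_mem_tri hhx hhy hp
  rw [sub_add_cancel] at hxa
  have corner : (a, b) ∈ tri (a - hx) b hx hy := ⟨by linarith, le_rfl, by simp [hhx.ne']⟩
  have horizontal : ∀ s ∈ uIcc a x, (s, b) ∈ tri (a - hx) b hx hy := fun s hs => by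
    rw [uIcc_of_ge hxa] at hs
    exact mem_tri_of_le hhx hhy corner (by linarith [hs.1]) le_rfl hs.2 le_rfl
  have vertical : ∀ t ∈ uIcc b y, (x, t) ∈ tri (a - hx) b hx hy := fun t ht => by
    rw [uIcc_of_le hby] at ht
    exact mem_tri_of_le hhx hhy hp hax ht.1 le_rfl ht.2
  refine (abs_sub_taylorPoly2_le' hw (fun s hs => h₃₀ _ (horizontal s hs))
    (fun s hs => h₂₁ _ (horizontal s hs)) (fun s hs => h₁₂ _ (horizontal s hs))
    (fun t ht => h₀₃ _ (vertical t ht))).trans ?_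
  have hM₃₀ : 0 ≤ M₃₀ := (abs_nonneg _).trans (h₃₀ _ hp)
  have hM₂₁ : 0 ≤ M₂₁ := (abs_nonneg _).trans (h₂₁ _ hp)
  have hM₁₂ : 0 ≤ M₁₂ := (abs_nonneg _).trans (h₁₂ _ hp)
  have hM₀₃ : 0 ≤ M₀₃ := (abs_nonneg _).trans (h₀₃ _ hp)
  have hdx : |x - a| ≤ hx := abs_le.2 ⟨by linarith, by linarith⟩
  have hdy : |y - b| ≤ hy := abs_le.2 ⟨by linarith, by linarith⟩
  gcongr

end TriangleEstimates

noncomputable def interpError (f : ℝ × ℝ → ℝ) (a b hx hy : ℝ) : ℝ :=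
  ∫ p in tri a b hx hy, (f p - interp f a b hx hy p)

section InterpolationError

variable {f g : ℝ × ℝ → ℝ} {a b hx hy : ℝ}

lemma continuous_interp : Continuous (interp f a b hx hy) := by
  unfold interp
  fun_prop

lemma abs_interp_le (hhx : 0 < hx) (hhy : 0 < hy) {B : ℝ} (hB : ∀ p ∈ tri a b hx hy, |f p| ≤ B)
    {p : ℝ × ℝ} (hp : p ∈ tri a b hx hy) : |interp f a b hx hy p| ≤ B := by
  obtain ⟨h₁, h₂, h₃⟩ := hp
  have l₁ : 0 ≤ (p.1 - a) / hx := div_nonneg (sub_nonneg.2 h₁) hhx.le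
  have l₂ : 0 ≤ (p.2 - b) / hy := div_nonneg (sub_nonneg.2 h₂) hhy.le
  have v₀ := abs_le.1 (hB (a, b) (by simp [tri]))
  have v₁ := abs_le.1 (hB (a + hx, b) (by simp [tri, hhx.ne', hhx.le]))
  have v₂ := abs_le.1 (hB (a, b + hy) (by simp [tri, hhy.ne', hhy.le]))
  have l₀ : 0 ≤ 1 - (p.1 - a) / hx - (p.2 - b) / hy := by linarith
  rw [interp, abs_le]
  constructor <;> nlinarith

lemma interpError_eq_add (hhx : 0 < hx) (hhy : 0 < hy) (hf : Continuous f) (hg : Continuous g) :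
    interpError f a b hx hy = interpError g a b hx hy + interpError (f - g) a b hx hy := by
  have hint : ∀ h : ℝ × ℝ → ℝ, Continuous h →
      IntegrableOn (fun p => h p - interp h a b hx hy p) (tri a b hx hy) :=
    fun h hh => (hh.sub continuous_interp).continuousOn.integrableOn_compact (isCompact_tri hhx hhy)
  rw [interpError, interpError, interpError, ← integral_add (hint g hg) (hint _ (hf.sub hg))]
  congr 1
  ext p
  simp only [interp, Pi.sub_apply]
  ring

lemma abs_interpError_le (hhx : 0 < hx) (hhy : 0 < hy) {B : ℝ}
    (hB : ∀ p ∈ tri a b hx hy, |f p| ≤ B) : |interpError f a b hx hy| ≤ 2 * B * (hx * hy) := by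
  have hB₀ : 0 ≤ B := (abs_nonneg _).trans (hB (a, b) (by simp [tri]))
  calc |interpError f a b hx hy| ≤ 2 * B * volume.real (tri a b hx hy) := by
        rw [interpError, ← Real.norm_eq_abs]
        refine norm_setIntegral_le_of_norm_le_const (isCompact_tri hhx hhy).measure_lt_top
          fun p hp => ?_
        rw [Real.norm_eq_abs]
        linarith [abs_sub (f p) (interp f a b hx hy p), hB p hp, abs_interp_le hhx hhy hB hp]
    _ ≤ 2 * B * (hx * hy) := by gcongr; exact volume_real_tri_le hhx hhy

lemma interpError_taylorPoly2_translate (hhx : hx ≠ 0) (hhy : hy ≠ 0) (c : ℝ × ℝ) (u v : ℝ) :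
    interpError (taylorPoly2 g c) (a - u) (b - v) hx hy
      = interpError (taylorPoly2 g c) a b hx hy := by
  rw [interpError, ← (measurePreserving_sub_right volume (u, v)).setIntegral_preimage_emb
    (measurableEmbedding_subRight _), preimage_sub_tri]
  congr 1
  ext p
  -- translating a quadratic changes it by an affine function, which `interp` reproduces
  simp only [taylorPoly2, interp, Prod.fst_sub, Prod.snd_sub]
  field_simp
  ring

end InterpolationError

/-- Cancellation between the two translated triangles `K_{i-1}` and `K_i`:
only third-order remainders survive. -/
theorem stmt1 :
    ∃ C > 0, ∀ (w : ℝ × ℝ → ℝ) (xi yj hx hy M30 M21 M12 M03 : ℝ),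
      0 < hx → 0 < hy → ContDiff ℝ 3 w →
      (∀ p ∈ tri (xi - hx) yj hx hy ∪ tri xi yj hx hy, |pdx (pdx (pdx w)) p| ≤ M30) →
      (∀ p ∈ tri (xi - hx) yj hx hy ∪ tri xi yj hx hy, |pdy (pdx (pdx w)) p| ≤ M21) →
      (∀ p ∈ tri (xi - hx) yj hx hy ∪ tri xi yj hx hy, |pdy (pdy (pdx w)) p| ≤ M12) →
      (∀ p ∈ tri (xi - hx) yj hx hy ∪ tri xi yj hx hy, |pdy (pdy (pdy w)) p| ≤ M03) →
      |(∫ p in tri (xi - hx) yj hx hy, (w p - interp w (xi - hx) yj hx hy p))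
        - ∫ p in tri xi yj hx hy, (w p - interp w xi yj hx hy p)|
      ≤ C * (hx ^ 4 * hy * M30 + hx ^ 3 * hy ^ 2 * M21
          + hx ^ 2 * hy ^ 3 * M12 + hx * hy ^ 4 * M03) := by
  refine ⟨4, by norm_num, fun w xi yj hx hy M30 M21 M12 M03 hhx hhy hw h30 h21 h12 h03 => ?_⟩
  have translate := interpError_taylorPoly2_translate (a := xi) (b := yj) hhx.ne' hhy.ne'
    (g := w) (xi, yj) hx 0
  rw [sub_zero] at translate
  set P := taylorPoly2 w (xi, yj)
  set B := M30 * hx ^ 3 + M21 * hx ^ 2 * hy + M12 * hx * hy ^ 2 + M03 * hy ^ 3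
  have hP : Continuous P := by unfold P taylorPoly2; fun_prop
  have left : ∀ p ∈ tri (xi - hx) yj hx hy, |(w - P) p| ≤ B := fun p hp =>
    abs_sub_taylorPoly2_le_on_left_tri hw hhx hhy (fun q hq => h30 q (.inl hq))
      (fun q hq => h21 q (.inl hq)) (fun q hq => h12 q (.inl hq)) (fun q hq => h03 q (.inl hq)) hp
  have right : ∀ p ∈ tri xi yj hx hy, |(w - P) p| ≤ B := fun p hp =>
    abs_sub_taylorPoly2_le_on_tri hw hhx hhy (fun q hq => h30 q (.inr hq))
      (fun q hq => h21 q (.inr hq)) (fun q hq => h12 q (.inr hq)) (fun q hq => h03 q (.inr hq)) hp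
  change |interpError w (xi - hx) yj hx hy - interpError w xi yj hx hy| ≤ _
  rw [interpError_eq_add hhx hhy hw.continuous hP, interpError_eq_add hhx hhy hw.continuous hP,
    translate]
  calc _ = |interpError (w - P) (xi - hx) yj hx hy - interpError (w - P) xi yj hx hy| := by ring_nf
    _ ≤ 2 * B * (hx * hy) + 2 * B * (hx * hy) :=
        (abs_sub _ _).trans (add_le_add (abs_interpError_le hhx hhy left)
          (abs_interpError_le hhx hhy right))
    _ = _ := by ring
end

section
/- Let w ∈ C² on the right triangle K with vertices (x_i,y_j), (x_{i+1},y_j), (x_i,y_{j+1}) (legs h_x, h_y) and let w^I be its affine interpolant at the vertices. Then ‖∂_x(w − w^I)‖_{L∞(K)} ≤ C (h_x ‖w_{xx}‖_{L∞(K)} + h_y ‖w_{xy}‖_{L∞(K)}) for an absolute constant C. -/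
/-!
The `x`-derivative of the affine interpolant is the difference quotient of `w` along the bottom
edge of the triangle, which by the mean value theorem equals `w_x (ξ, y_j)` for some `ξ` on that
edge. So the error at `p` is `w_x p - w_x (ξ, y_j)`: walking from `p` straight down to the bottom
edge costs at most `h_y ‖w_xy‖`, and then along the edge to `ξ` at most `h_x ‖w_xx‖`. Hence `C = 1`.
-/

open Set

section PartialDerivatives

variable {f : ℝ × ℝ → ℝ}

lemma pdx_eq_fderiv_s16 (hf : Differentiable ℝ f) : pdx f = fun q => fderiv ℝ f q (1, 0) := by
  funext q
  exact ((hf q).hasFDerivAt.comp_hasDerivAt q.1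
    ((hasDerivAt_id _).prodMk (hasDerivAt_const _ _))).deriv

lemma ContDiff.pdx {m n : WithTop ℕ∞} (hf : ContDiff ℝ n f) (hmn : m + 1 ≤ n) :
    ContDiff ℝ m (pdx f) := by
  have hn : n ≠ 0 := ne_bot_of_le_ne_bot (by simp) hmn
  rw [pdx_eq_fderiv_s16 (hf.differentiable hn)]
  exact (hf.fderiv_right hmn).clm_apply contDiff_const

lemma hasDerivAt_pdx_s16 {p : ℝ × ℝ} (hf : DifferentiableAt ℝ f p) :
    HasDerivAt (fun t => f (t, p.2)) (pdx f p) p.1 :=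
  (hf.comp p.1 (differentiableAt_id.prodMk (differentiableAt_const _))).hasDerivAt

lemma abs_sub_le_of_abs_pdx_le (hf : Differentiable ℝ f) {s : Set ℝ} (hs : Convex ℝ s)
    {y M a b : ℝ} (h : ∀ t ∈ s, |pdx f (t, y)| ≤ M) (ha : a ∈ s) (hb : b ∈ s) :
    |f (b, y) - f (a, y)| ≤ M * |b - a| :=
  hs.norm_image_sub_le_of_norm_deriv_le (f := fun t => f (t, y))
    (fun _ _ => by fun_prop) h ha hb

lemma abs_sub_le_of_abs_pdy_le (hf : Differentiable ℝ f) {s : Set ℝ} (hs : Convex ℝ s)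
    {x M a b : ℝ} (h : ∀ t ∈ s, |pdy f (x, t)| ≤ M) (ha : a ∈ s) (hb : b ∈ s) :
    |f (x, b) - f (x, a)| ≤ M * |b - a| :=
  hs.norm_image_sub_le_of_norm_deriv_le (f := fun t => f (x, t))
    (fun _ _ => by fun_prop) h ha hb

end PartialDerivatives

section Triangle

variable {xi yj hx hy : ℝ} {p : ℝ × ℝ}

lemma fst_sub_le_of_mem_tri (hx₀ : 0 < hx) (hy₀ : 0 < hy) (hp : p ∈ tri xi yj hx hy) :
    p.1 - xi ≤ hx := by
  obtain ⟨-, h2, h3⟩ := hp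
  have : 0 ≤ (p.2 - yj) / hy := div_nonneg (by linarith) hy₀.le
  exact (div_le_one hx₀).mp (by linarith)

lemma snd_sub_le_of_mem_tri (hx₀ : 0 < hx) (hy₀ : 0 < hy) (hp : p ∈ tri xi yj hx hy) :
    p.2 - yj ≤ hy := by
  obtain ⟨h1, -, h3⟩ := hp
  have : 0 ≤ (p.1 - xi) / hx := div_nonneg (by linarith) hx₀.le
  exact (div_le_one hy₀).mp (by linarith)

lemma mk_mem_tri_of_mem_Icc_snd (hy₀ : 0 < hy) (hp : p ∈ tri xi yj hx hy) {t : ℝ}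
    (ht : t ∈ Icc yj p.2) : (p.1, t) ∈ tri xi yj hx hy := by
  obtain ⟨h1, -, h3⟩ := hp
  have : (t - yj) / hy ≤ (p.2 - yj) / hy := by gcongr; exact ht.2
  exact ⟨h1, ht.1, by dsimp only; linarith⟩

lemma mk_mem_tri_of_mem_Icc_fst (hx₀ : 0 < hx) {t : ℝ} (ht : t ∈ Icc xi (xi + hx)) :
    (t, yj) ∈ tri xi yj hx hy := by
  refine ⟨ht.1, le_rfl, ?_⟩
  rw [sub_self, zero_div, add_zero, div_le_one hx₀]
  linarith [ht.2]

end Triangle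

lemma hasDerivAt_interp_fst (w : ℝ × ℝ → ℝ) (xi yj hx hy y x : ℝ) :
    HasDerivAt (fun t => interp w xi yj hx hy (t, y))
      ((w (xi + hx, yj) - w (xi, yj)) / hx) x := by
  have affine : (fun t => interp w xi yj hx hy (t, y)) =
      fun t => (w (xi + hx, yj) - w (xi, yj)) / hx * (t - xi) + interp w xi yj hx hy (xi, y) := by
    funext t
    simp only [interp]
    ring
  rw [affine]
  simpa using (((hasDerivAt_id x).sub_const xi).const_mul
    ((w (xi + hx, yj) - w (xi, yj)) / hx)).add_const (interp w xi yj hx hy (xi, y))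

lemma pdx_sub_interp {w : ℝ × ℝ → ℝ} (hw : Differentiable ℝ w) (xi yj hx hy : ℝ)
    (p : ℝ × ℝ) :
    pdx (fun q => w q - interp w xi yj hx hy q) p
      = pdx w p - (w (xi + hx, yj) - w (xi, yj)) / hx :=
  ((hasDerivAt_pdx_s16 (hw p)).sub (hasDerivAt_interp_fst w xi yj hx hy p.2 p.1)).deriv

theorem abs_pdx_sub_interp_le {w : ℝ × ℝ → ℝ} {xi yj hx hy M20 M11 : ℝ}
    (hx₀ : 0 < hx) (hy₀ : 0 < hy) (hw : ContDiff ℝ 2 w)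
    (hxx : ∀ p ∈ tri xi yj hx hy, |pdx (pdx w) p| ≤ M20)
    (hxy : ∀ p ∈ tri xi yj hx hy, |pdy (pdx w) p| ≤ M11)
    {p : ℝ × ℝ} (hp : p ∈ tri xi yj hx hy) :
    |pdx (fun q => w q - interp w xi yj hx hy q) p| ≤ hx * M20 + hy * M11 := by
  have hw₁ : Differentiable ℝ w := hw.differentiable (by norm_num)
  have hg : Differentiable ℝ (pdx w) :=
    (hw.pdx (m := 1) (by norm_num)).differentiable (by norm_num)
  obtain ⟨ξ, hξ, hslope⟩ := exists_deriv_eq_slope (fun t => w (t, yj))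
    (lt_add_of_pos_right xi hx₀)
    (hw₁.continuous.comp (continuous_id.prodMk continuous_const)).continuousOn (by fun_prop)
  rw [add_sub_cancel_left] at hslope
  have corner : (xi, yj) ∈ tri xi yj hx hy :=
    mk_mem_tri_of_mem_Icc_fst hx₀ (left_mem_Icc.2 (by linarith))
  have hM20 : 0 ≤ M20 := (abs_nonneg _).trans (hxx _ corner)
  have hM11 : 0 ≤ M11 := (abs_nonneg _).trans (hxy _ corner)
  have vertical : |pdx w p - pdx w (p.1, yj)| ≤ M11 * hy := calc
    _ ≤ M11 * |p.2 - yj| := abs_sub_le_of_abs_pdy_le hg (convex_Icc yj p.2)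
          (fun t ht => hxy _ (mk_mem_tri_of_mem_Icc_snd hy₀ hp ht))
          (left_mem_Icc.2 hp.2.1) (right_mem_Icc.2 hp.2.1)
    _ ≤ M11 * hy := by
      gcongr
      rw [abs_of_nonneg (by linarith [hp.2.1])]
      exact snd_sub_le_of_mem_tri hx₀ hy₀ hp
  have horizontal : |pdx w (p.1, yj) - pdx w (ξ, yj)| ≤ M20 * hx := calc
    _ ≤ M20 * |p.1 - ξ| := abs_sub_le_of_abs_pdx_le hg (convex_Icc xi (xi + hx))
          (fun t ht => hxx _ (mk_mem_tri_of_mem_Icc_fst hx₀ ht))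
          (Ioo_subset_Icc_self hξ)
          ⟨hp.1, by linarith [fst_sub_le_of_mem_tri hx₀ hy₀ hp]⟩
    _ ≤ M20 * hx := by
      gcongr
      have := fst_sub_le_of_mem_tri hx₀ hy₀ hp
      rw [abs_sub_le_iff]
      constructor <;> linarith [hξ.1, hξ.2, hp.1]
  rw [pdx_sub_interp hw₁, ← hslope]
  calc |pdx w p - pdx w (ξ, yj)|
      ≤ |pdx w p - pdx w (p.1, yj)| + |pdx w (p.1, yj) - pdx w (ξ, yj)| := abs_sub_le _ _ _
    _ ≤ hx * M20 + hy * M11 := by linarith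

/-- Anisotropic first-derivative interpolation error estimate on axis-aligned right
triangles: `‖∂_x(w - w^I)‖_{L∞(K)} ≤ C (hx ‖w_xx‖ + hy ‖w_xy‖)` with absolute `C`. -/
theorem stmt16 :
    ∃ C > (0:ℝ), ∀ (w : ℝ × ℝ → ℝ) (xi yj hx hy M20 M11 : ℝ),
      0 < hx → 0 < hy → ContDiff ℝ 2 w →
      (∀ p ∈ tri xi yj hx hy, |pdx (pdx w) p| ≤ M20) →
      (∀ p ∈ tri xi yj hx hy, |pdy (pdx w) p| ≤ M11) →
      ∀ p ∈ tri xi yj hx hy,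
        |pdx (fun q => w q - interp w xi yj hx hy q) p|
          ≤ C * (hx * M20 + hy * M11) := by
  refine ⟨1, one_pos, fun w xi yj hx hy M20 M11 hx₀ hy₀ hw hxx hxy p hp => ?_⟩
  rw [one_mul]
  exact abs_pdx_sub_interp_le hx₀ hy₀ hw hxx hxy hp
end
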